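/- There exists η₁ > 0 such that for every fluid model (y, x) and Lebesgue-almost every t ≥ 0 with x(t) > -λ/β, the function s ↦ ‖(y(s), x(s))‖_* is differentiable at t and its derivative at t is at most -η₁ · ‖(y(t), x(t))‖_*. -/

import Mathlib

noncomputable def nu1 (β γ ε : ℝ) : ℝ := (γ * β - Real.sqrt (γ^2 * β^2 - 4 * ε * β)) / 2
noncomputable def nu2 (β γ ε : ℝ) : ℝ := (γ * β + Real.sqrt (γ^2 * β^2 - 4 * ε * β)) / 2

/-- The norm `‖u‖_*`: the Euclidean norm of the coordinates of `u` in the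
eigenvector basis `v₁ = (β/ν₁, -1)`, `v₂ = (β/ν₂, -1)`. -/
noncomputable def starNorm (β γ ε : ℝ) (u : ℝ × ℝ) : ℝ :=
  let a1 := β / nu1 β γ ε
  let a2 := β / nu2 β γ ε
  let α1 := (u.1 + a2 * u.2) / (a1 - a2)
  let α2 := -u.2 - α1
  Real.sqrt (α1 ^ 2 + α2 ^ 2)
open MeasureTheory Set Filter

/-- A fluid model: locally Lipschitz pair `(y, x)` on `[0,∞)` with `x ≥ -λ/β`,
satisfying the fluid ODE a.e. on `[0,∞)`. -/
def IsFluidModel (β γ ε lam : ℝ) (y x : ℝ → ℝ) : Prop :=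
  (∀ T : ℝ, 0 < T → ∃ K : NNReal,
      LipschitzOnWith K y (Set.Icc 0 T) ∧ LipschitzOnWith K x (Set.Icc 0 T)) ∧
  (∀ t : ℝ, 0 ≤ t → -lam / β ≤ x t) ∧
  (∀ᵐ t ∂(volume.restrict (Set.Ici (0 : ℝ))),
    ∃ y' x' : ℝ, HasDerivAt y y' t ∧ HasDerivAt x x' t ∧
      (-lam / β < x t → y' = β * x t ∧ x' = -(γ * β * x t) - ε * y t) ∧
      (x t = -lam / β → y' = -lam ∧ x' = max (γ * lam - ε * y t) 0))

/-! In the coordinates `α` of `u` with respect to the eigenbasis `v₁, v₂`, the interior dynamics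
decouple into `α₁' = -ν₁ α₁`, `α₂' = -ν₂ α₂`, and `‖u‖_* = ‖α‖` is Euclidean. Hence
`‖α‖' = ⟪α, α'⟫ / ‖α‖ ≤ -ν₁ ‖α‖` since `ν₁ < ν₂`, and at `α = 0` the derivative is `0` because `α'`
vanishes there too; so `η₁ = ν₁` works. -/

open scoped RealInnerProductSpace

section NormDerivative

variable {E : Type*} [NormedAddCommGroup E] [InnerProductSpace ℝ E] {u : ℝ → E} {u' : E} {t : ℝ}

theorem HasDerivAt.norm_of_ne_zero (hu : HasDerivAt u u' t) (h0 : u t ≠ 0) :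
    HasDerivAt (‖u ·‖) (⟪u t, u'⟫ / ‖u t‖) t := by
  have hsq := hu.norm_sq.sqrt (pow_ne_zero 2 (norm_ne_zero_iff.2 h0))
  simp only [Real.sqrt_sq (norm_nonneg _)] at hsq
  convert hsq using 1
  field_simp

theorem HasDerivAt.norm_of_eq_zero (hu : HasDerivAt u 0 t) (h0 : u t = 0) :
    HasDerivAt (‖u ·‖) 0 t := by
  rw [hasDerivAt_iff_isLittleO] at hu ⊢
  simpa [h0] using hu.norm_left

theorem HasDerivAt.exists_hasDerivAt_norm_le {η : ℝ} (hu : HasDerivAt u u' t)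
    (h0 : u t = 0 → u' = 0) (hinner : ⟪u t, u'⟫ ≤ -η * ‖u t‖ ^ 2) :
    ∃ d, HasDerivAt (‖u ·‖) d t ∧ d ≤ -η * ‖u t‖ := by
  by_cases hz : u t = 0
  · exact ⟨0, (h0 hz ▸ hu).norm_of_eq_zero hz, by simp [hz]⟩
  · refine ⟨_, hu.norm_of_ne_zero hz, ?_⟩
    have hpos : 0 < ‖u t‖ := norm_pos_iff.2 hz
    rw [div_le_iff₀ hpos]
    linarith

end NormDerivative

theorem hasDerivAt_euclideanSpace_fin_two {a b : ℝ → ℝ} {a' b' t : ℝ} (ha : HasDerivAt a a' t)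
    (hb : HasDerivAt b b' t) : HasDerivAt (fun s => !₂[a s, b s]) !₂[a', b'] t := by
  have hpi : HasDerivAt (fun s => ![a s, b s]) ![a', b'] t :=
    hasDerivAt_pi.2 (Fin.forall_fin_two.2 ⟨ha, hb⟩)
  exact (PiLp.continuousLinearEquiv 2 ℝ _).symm.hasFDerivAt.comp_hasDerivAt t hpi

theorem EuclideanSpace.inner_neg_diagonal_fin_two_le {μ₁ μ₂ : ℝ} (h : μ₁ ≤ μ₂)
    (v : EuclideanSpace ℝ (Fin 2)) : ⟪v, !₂[-μ₁ * v 0, -μ₂ * v 1]⟫ ≤ -μ₁ * ‖v‖ ^ 2 := by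
  simp only [PiLp.inner_apply, EuclideanSpace.norm_sq_eq, Fin.sum_univ_two, RCLike.inner_apply,
    Real.ringHom_apply, Real.norm_eq_abs, sq_abs, Matrix.cons_val_zero, Matrix.cons_val_one,
    Matrix.cons_val_fin_one]
  nlinarith [sq_nonneg (v 1)]

section Spectrum

variable {β γ ε : ℝ}

theorem nu1_add_nu2 : nu1 β γ ε + nu2 β γ ε = γ * β := by
  unfold nu1 nu2; ring

theorem nu1_mul_nu2 (hdisc : 0 ≤ γ ^ 2 * β ^ 2 - 4 * ε * β) : nu1 β γ ε * nu2 β γ ε = ε * β := by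
  unfold nu1 nu2
  nlinarith [Real.sq_sqrt hdisc]

theorem nu1_lt_nu2 (hdisc : 0 < γ ^ 2 * β ^ 2 - 4 * ε * β) : nu1 β γ ε < nu2 β γ ε := by
  unfold nu1 nu2
  linarith [Real.sqrt_pos.2 hdisc]

theorem nu1_pos (hβ : 0 < β) (hγ : 0 < γ) (hε : 0 < ε) : 0 < nu1 β γ ε := by
  have hγβ : 0 < γ * β := mul_pos hγ hβ
  have : √(γ ^ 2 * β ^ 2 - 4 * ε * β) < γ * β :=
    (Real.sqrt_lt' hγβ).2 (by nlinarith [mul_pos hε hβ])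
  unfold nu1; linarith

end Spectrum

noncomputable def eigenCoords (β γ ε : ℝ) (u : ℝ × ℝ) : EuclideanSpace ℝ (Fin 2) :=
  let α1 := (u.1 + β / nu2 β γ ε * u.2) / (β / nu1 β γ ε - β / nu2 β γ ε)
  !₂[α1, -u.2 - α1]

theorem starNorm_eq_norm_eigenCoords (β γ ε : ℝ) (u : ℝ × ℝ) :
    starNorm β γ ε u = ‖eigenCoords β γ ε u‖ := by
  simp [starNorm, eigenCoords, EuclideanSpace.norm_eq, Fin.sum_univ_two]

-- `u ↦ uA`: the dynamics of `(y, x)` away from the boundary `x = -λ/β`.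
def fluidField (β γ ε : ℝ) (u : ℝ × ℝ) : ℝ × ℝ := (β * u.2, -(γ * β * u.2) - ε * u.1)

theorem eigenCoords_fluidField {β γ ε : ℝ} (hβ : 0 < β) (hγ : 0 < γ) (hε : 0 < ε)
    (hdisc : 0 < γ ^ 2 * β ^ 2 - 4 * ε * β) (u : ℝ × ℝ) :
    eigenCoords β γ ε (fluidField β γ ε u) =
      !₂[-nu1 β γ ε * eigenCoords β γ ε u 0, -nu2 β γ ε * eigenCoords β γ ε u 1] := by
  have h1 := nu1_pos hβ hγ hε
  have h12 := nu1_lt_nu2 hdisc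
  have hsum := nu1_add_nu2 (β := β) (γ := γ) (ε := ε)
  have hprod := nu1_mul_nu2 hdisc.le
  have h2 : 0 < nu2 β γ ε := h1.trans h12
  have hne : nu2 β γ ε - nu1 β γ ε ≠ 0 := (sub_pos.2 h12).ne'
  ext i; fin_cases i <;>
    simp only [eigenCoords, fluidField, Fin.zero_eta, Fin.mk_one, Matrix.cons_val_zero,
      Matrix.cons_val_one, Matrix.cons_val_fin_one] <;> field_simp
  · linear_combination (β * u.2) * hsum + u.1 * hprod
  · linear_combination (-nu2 β γ ε * u.1) * hprod - (nu2 β γ ε * β * u.2) * hsum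

theorem HasDerivAt.eigenCoords {y x : ℝ → ℝ} {y' x' t : ℝ} (β γ ε : ℝ)
    (hy : HasDerivAt y y' t) (hx : HasDerivAt x x' t) :
    HasDerivAt (fun s => eigenCoords β γ ε (y s, x s)) (eigenCoords β γ ε (y', x')) t := by
  have h1 := (hy.add (hx.const_mul (β / nu2 β γ ε))).div_const (β / nu1 β γ ε - β / nu2 β γ ε)
  exact hasDerivAt_euclideanSpace_fin_two h1 (hx.neg.sub h1)

theorem stmt_2_general (β γ ε lam : ℝ) (hβ : 0 < β) (hγ : 0 < γ) (hε : 0 < ε)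
    (hεbound : ε < γ ^ 2 * β / 4) :
    ∃ η₁ : ℝ, 0 < η₁ ∧
      ∀ y x : ℝ → ℝ, IsFluidModel β γ ε lam y x →
        ∀ᵐ t ∂(volume.restrict (Set.Ici (0 : ℝ))),
          -lam / β < x t →
            ∃ d : ℝ, HasDerivAt (fun s => starNorm β γ ε (y s, x s)) d t ∧
              d ≤ -η₁ * starNorm β γ ε (y t, x t) := by
  have hdisc : 0 < γ ^ 2 * β ^ 2 - 4 * ε * β := by nlinarith
  refine ⟨nu1 β γ ε, nu1_pos hβ hγ hε, fun y x hfluid => ?_⟩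
  filter_upwards [hfluid.2.2] with t ⟨y', x', hy, hx, hinterior, _⟩ hxt
  obtain ⟨rfl, rfl⟩ := hinterior hxt
  simp only [starNorm_eq_norm_eigenCoords]
  have hfield := eigenCoords_fluidField hβ hγ hε hdisc (y t, x t)
  refine (hy.eigenCoords β γ ε hx).exists_hasDerivAt_norm_le (fun h0 => ?_) ?_
  · change eigenCoords β γ ε (fluidField β γ ε (y t, x t)) = 0
    simp [hfield, h0]
  · change ⟪_, eigenCoords β γ ε (fluidField β γ ε (y t, x t))⟫ ≤ _
    rw [hfield]
    exact EuclideanSpace.inner_neg_diagonal_fin_two_le (nu1_lt_nu2 hdisc).le _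

/-- Lemma 4.2(i): away from the boundary, the `‖·‖_*`-norm of a
fluid model decreases at rate proportional to itself. -/
theorem stmt_2 (β γ ε lam : ℝ) (hβ : 0 < β) (hγ : 0 < γ) (hε : 0 < ε)
    (hεbound : ε < γ ^ 2 * β / 4) (hlam : 0 < lam) :
    ∃ η₁ : ℝ, 0 < η₁ ∧
      ∀ y x : ℝ → ℝ, IsFluidModel β γ ε lam y x →
        ∀ᵐ t ∂(volume.restrict (Set.Ici (0 : ℝ))),
          -lam / β < x t →
            ∃ d : ℝ, HasDerivAt (fun s => starNorm β γ ε (y s, x s)) d t ∧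
              d ≤ -η₁ * starNorm β γ ε (y t, x t) :=
  stmt_2_general β γ ε lam hβ hγ hε hεbound
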